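/- arXiv:1512.00997 — 6 statements merged into one kernel-verified Lean document; each statement's English description precedes it below -/
import Mathlib

section
/- Let n be even and suppose L₁, L₂ are nearly orthogonal Latin squares of order n, and that applying a symbol permutation σ_E ∈ S_n uniformly to both yields another pair of nearly orthogonal Latin squares. Then σ_E(y + n/2) ≡ σ_E(y) + n/2 (mod n) for all 0 ≤ y < n/2. -/
/-- An `n × n` array on `ZMod n` is a Latin square if every row and column is a bijection. -/
def IsLatinSq (n : ℕ) (L : ZMod n → ZMod n → ZMod n) : Prop :=
  (∀ r, Function.Bijective fun c => L r c) ∧ (∀ c, Function.Bijective fun r => L r c)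

/-- A Latin square is cyclic if `(r,c,e) ∈ L` implies `(r,c+1,e+1) ∈ L`. -/
def IsCyclicSq (n : ℕ) (L : ZMod n → ZMod n → ZMod n) : Prop :=
  ∀ r c, L r (c + 1) = L r c + 1

/-- Number of cells where the superimposition of `L₁, L₂` shows the ordered pair `(l, l')`. -/
def pairCount (n : ℕ) [NeZero n] (L₁ L₂ : ZMod n → ZMod n → ZMod n) (l l' : ZMod n) : ℕ :=
  (Finset.univ.filter fun p : ZMod n × ZMod n => L₁ p.1 p.2 = l ∧ L₂ p.1 p.2 = l').card

/-- Near orthogonality: `(l,l)` never occurs, `(l, l+n/2)` occurs twice, all other pairs once. -/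
def NearlyOrth (n : ℕ) [NeZero n] (L₁ L₂ : ZMod n → ZMod n → ZMod n) : Prop :=
  ∀ l l' : ZMod n,
    (l' = l → pairCount n L₁ L₂ l l' = 0) ∧
    (l' = l + ((n / 2 : ℕ) : ZMod n) → l' ≠ l → pairCount n L₁ L₂ l l' = 2) ∧
    (l' ≠ l → l' ≠ l + ((n / 2 : ℕ) : ZMod n) → pairCount n L₁ L₂ l l' = 1)

/-- If applying a symbol permutation `σE` to a nearly orthogonal pair again yields a nearly
orthogonal pair, then `σE(y + n/2) = σE(y) + n/2` for all `y`. -/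
theorem symbolPerm_respects_halfshift (n : ℕ) [NeZero n] (hn : Even n)
    (L₁ L₂ : ZMod n → ZMod n → ZMod n)
    (hLatin₁ : IsLatinSq n L₁) (hLatin₂ : IsLatinSq n L₂)
    (hNO : NearlyOrth n L₁ L₂)
    (σE : Equiv.Perm (ZMod n))
    (hNO' : NearlyOrth n (fun r c => σE (L₁ r c)) (fun r c => σE (L₂ r c))) :
    ∀ y : ZMod n, σE (y + ((n / 2 : ℕ) : ZMod n)) = σE y + ((n / 2 : ℕ) : ZMod n) := by
  intro y
  set h : ZMod n := ((n / 2 : ℕ) : ZMod n) with hh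
  have hn2 : n / 2 < n := Nat.div_lt_self (Nat.pos_of_ne_zero (NeZero.ne n)) one_lt_two
  have hn2pos : 0 < n / 2 := by
    obtain ⟨k, hk⟩ := hn
    have : n ≠ 0 := NeZero.ne n
    omega
  have hne : h ≠ 0 := by
    rw [hh, Ne, ZMod.natCast_eq_zero_iff]
    intro hd
    have := Nat.le_of_dvd hn2pos hd
    omega
  have hyy : y + h ≠ y := by
    intro hEq
    exact hne (by linear_combination hEq)
  -- pair counts are preserved under the symbol permutation
  have hcount : ∀ l l' : ZMod n,
      pairCount n (fun r c => σE (L₁ r c)) (fun r c => σE (L₂ r c)) (σE l) (σE l')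
        = pairCount n L₁ L₂ l l' := by
    intro l l'
    unfold pairCount
    congr 1
    apply Finset.filter_congr
    intro p _
    simp [σE.injective.eq_iff]
  have h2 : pairCount n L₁ L₂ y (y + h) = 2 :=
    (hNO y (y + h)).2.1 rfl hyy
  have h2' : pairCount n (fun r c => σE (L₁ r c)) (fun r c => σE (L₂ r c)) (σE y) (σE (y + h)) = 2 := by
    rw [hcount]; exact h2
  by_contra hc
  have hne' : σE (y + h) ≠ σE y := fun e => hyy (σE.injective e)
  have h1 : pairCount n (fun r c => σE (L₁ r c)) (fun r c => σE (L₂ r c)) (σE y) (σE (y + h)) = 1 :=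
    (hNO' (σE y) (σE (y + h))).2.2 hne' hc
  omega
end

section
/- Let L be a cyclic Latin square of order n and let σ_C, σ_E ∈ S_n be such that the array L' obtained from L by permuting columns by σ_C and symbols by σ_E is also a cyclic Latin square. Then, setting x = σ_E(1) − σ_E(0) (mod n), we have x = σ_C(1) − σ_C(0) (mod n), gcd(x,n) = 1, and σ_C(j) ≡ σ_C(0) + jx (mod n) and σ_E(j) ≡ σ_E(0) + jx (mod n) for all 0 ≤ j < n. -/
theorem ZMod.eq_add_mul_of_forall_add_one {n : ℕ} {f : ZMod n → ZMod n} {k : ZMod n}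
    (h : ∀ c, f (c + 1) = f c + k) (c : ZMod n) : f c = f 0 + c * k := by
  have hper : Function.Periodic (fun c => f c - c * k) 1 := fun c => by
    simp only [h]
    ring
  have := hper.int_mul_eq (c.cast : ℤ)
  rw [mul_one, ZMod.intCast_zmod_cast, zero_mul, sub_zero] at this
  linear_combination this

section Affine

variable {R : Type*} [CommRing R]

theorem isUnit_of_surjective_of_forall_eq_add_mul {f : R → R} (hf : Function.Surjective f)
    {d : R} (h : ∀ s, f s = f 0 + s * d) : IsUnit d := by
  obtain ⟨c, hc⟩ := hf (f 0 + 1)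
  exact .of_mul_eq_one c (by linear_combination (h c).symm.trans hc : d * c = 1)

theorem Equiv.symm_apply_eq_add_mul_inverse (τ : R ≃ R) {d : R}
    (h : ∀ s, τ s = τ 0 + s * d) (j : R) : τ.symm j = τ.symm 0 + j * Ring.inverse d := by
  have hd := isUnit_of_surjective_of_forall_eq_add_mul τ.surjective h
  have hsymm : ∀ j, τ.symm j = (j - τ 0) * Ring.inverse d := fun j => by
    rw [τ.symm_apply_eq, h, mul_assoc, Ring.inverse_mul_cancel d hd]
    ring
  rw [hsymm, hsymm]
  ring

end Affine

section CyclicSquare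

variable {n : ℕ} {L : ZMod n → ZMod n → ZMod n}

theorem IsCyclicSq.apply_eq_add (hCyc : IsCyclicSq n L) (r c : ZMod n) : L r c = L r 0 + c := by
  simpa using ZMod.eq_add_mul_of_forall_add_one (hCyc r) c

theorem IsCyclicSq.map_add_symm_sub (hCyc : IsCyclicSq n L)
    (hsurj : Function.Surjective fun r => L r 0) {σC σE : Equiv.Perm (ZMod n)}
    (hCyc' : IsCyclicSq n fun r c => σE (L r (σC.symm c))) (a c : ZMod n) :
    σE (a + (σC.symm (c + 1) - σC.symm c)) = σE a + 1 := by
  obtain ⟨r, hr⟩ := hsurj (a - σC.symm c)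
  have h := hCyc' r c
  simp only [hCyc.apply_eq_add r (σC.symm _), hr] at h
  rwa [sub_add_cancel, ← add_sub_right_comm, add_sub_assoc] at h

end CyclicSquare

theorem colSymbolPerm_of_cyclic_general (n : ℕ) (L : ZMod n → ZMod n → ZMod n)
    (hLatin : IsLatinSq n L) (hCyc : IsCyclicSq n L)
    (σC σE : Equiv.Perm (ZMod n))
    (hCyc' : IsCyclicSq n fun r c => σE (L r (σC.symm c))) :
    σE 1 - σE 0 = σC 1 - σC 0 ∧
    IsUnit (σE 1 - σE 0) ∧
    (∀ j : ZMod n, σC j = σC 0 + j * (σE 1 - σE 0)) ∧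
    (∀ j : ZMod n, σE j = σE 0 + j * (σE 1 - σE 0)) := by
  set d := σC.symm 1 - σC.symm 0
  have hkey := hCyc.map_add_symm_sub (hLatin.2 0).2 hCyc'
  have hE : ∀ a, σE (a + d) = σE a + 1 := fun a => by simpa using hkey a 0
  have hC : ∀ c, σC.symm (c + 1) = σC.symm c + d := fun c => by
    linear_combination σE.injective ((hkey 0 c).trans (hE 0).symm)
  have hE' : ∀ s, σE.symm (s + 1) = σE.symm s + d := fun s => by
    rw [σE.symm_apply_eq, hE, Equiv.apply_symm_apply]
  have hCaff := ZMod.eq_add_mul_of_forall_add_one hC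
  have hd := isUnit_of_surjective_of_forall_eq_add_mul σC.symm.surjective hCaff
  have hσC := Equiv.symm_apply_eq_add_mul_inverse _ hCaff
  have hσE := Equiv.symm_apply_eq_add_mul_inverse _ (ZMod.eq_add_mul_of_forall_add_one hE')
  simp only [Equiv.symm_symm] at hσC hσE
  have hx : σE 1 - σE 0 = Ring.inverse d := by rw [hσE 1]; ring
  refine ⟨by rw [hx, hσC 1]; ring, hx ▸ hd.ringInverse, fun j => hx ▸ hσC j,
    fun j => hx ▸ hσE j⟩

/-- Lemma 4: if permuting the columns of a cyclic Latin square by `σC` and the symbols by `σE`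
again gives a cyclic Latin square, then with `x = σE(1) - σE(0)` we have
`x = σC(1) - σC(0)`, `x` is a unit mod `n`, and `σC(j) = σC(0) + jx`, `σE(j) = σE(0) + jx`. -/
theorem colSymbolPerm_of_cyclic (n : ℕ) (L : ZMod n → ZMod n → ZMod n)
    (hLatin : IsLatinSq n L) (hCyc : IsCyclicSq n L)
    (σC σE : Equiv.Perm (ZMod n))
    (hLatin' : IsLatinSq n fun r c => σE (L r (σC.symm c)))
    (hCyc' : IsCyclicSq n fun r c => σE (L r (σC.symm c))) :
    σE 1 - σE 0 = σC 1 - σC 0 ∧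
    IsUnit (σE 1 - σE 0) ∧
    (∀ j : ZMod n, σC j = σC 0 + j * (σE 1 - σE 0)) ∧
    (∀ j : ZMod n, σE j = σE 0 + j * (σE 1 - σE 0)) :=
  colSymbolPerm_of_cyclic_general n L hLatin hCyc σC σE hCyc'
end

section
/- For 1 ≤ x < n with gcd(x,n) = 1, define m_x ∈ S_n by m_x(j) = jx mod n, and τ ∈ S_n by τ(j) = j+1 mod n. Then for any cyclic Latin square L of order n and any permutation σ_R ∈ S_n, the array L(σ_R, m_x, m_x·τ^{j'}) (rows permuted by σ_R, columns by m_x, symbols by m_x followed by τ^{j'}) is again a cyclic Latin square, for any 0 ≤ j' < n. -/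
/-- For `gcd(x,n) = 1`, the image `L(σ_R, m_x, m_x·τ^{j'})` of a cyclic Latin square
(rows permuted by `σ_R`, columns multiplied by `x`, symbols multiplied by `x` then shifted
by `j'`), i.e. the square `L'` with `L'(σ_R r, x·c) = x·L(r,c) + j'`, is again a cyclic
Latin square. -/
theorem image_under_mx_tau_is_cyclic (n : ℕ) (L : ZMod n → ZMod n → ZMod n)
    (hLatin : IsLatinSq n L) (hCyc : IsCyclicSq n L)
    (σR : Equiv.Perm (ZMod n)) (x j' : ℕ) (hx1 : 1 ≤ x) (hxn : x < n) (hj' : j' < n)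
    (hx : Nat.Coprime x n)
    (L' : ZMod n → ZMod n → ZMod n)
    (hL' : ∀ r c : ZMod n, L' (σR r) ((x : ZMod n) * c) = (x : ZMod n) * L r c + (j' : ZMod n)) :
    IsLatinSq n L' ∧ IsCyclicSq n L' := by
  have hn : NeZero n := ⟨by omega⟩
  set u : (ZMod n)ˣ := ZMod.unitOfCoprime x hx with hu
  have hux : (u : ZMod n) = (x : ZMod n) := rfl
  -- general formula for L'
  have key : ∀ r' c' : ZMod n,
      L' r' c' = (x : ZMod n) * L (σR.symm r') ((u⁻¹ : (ZMod n)ˣ) * c') + (j' : ZMod n) := by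
    intro r' c'
    have := hL' (σR.symm r') ((u⁻¹ : (ZMod n)ˣ) * c')
    simpa [← hux, ← mul_assoc, Units.mul_inv] using this
  -- cyclic shift by any element
  have shiftNat : ∀ (r c : ZMod n) (k : ℕ), L r (c + k) = L r c + k := by
    intro r c k
    induction k with
    | zero => simp
    | succ k ih => push_cast; rw [← add_assoc, hCyc, ih, add_assoc]
  have shift : ∀ (r c : ZMod n) (z : ZMod n), L r (c + z) = L r c + z := by
    intro r c z
    obtain ⟨k, rfl⟩ := ZMod.natCast_rightInverse.surjective z
    exact shiftNat r c k
  have huinv : (x : ZMod n) * ((u⁻¹ : (ZMod n)ˣ) : ZMod n) = 1 := by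
    rw [← hux]; exact u.mul_inv
  have affbij : Function.Bijective (fun e : ZMod n => (x : ZMod n) * e + (j' : ZMod n)) := by
    have he : (fun e : ZMod n => (x : ZMod n) * e + (j' : ZMod n)) =
        (Equiv.addRight ((j' : ZMod n))) ∘ (Units.mulLeft u) := by
      funext e; simp [← hux, Units.mulLeft]
    rw [he]
    exact (Equiv.addRight _).bijective.comp (Units.mulLeft u).bijective
  constructor
  · constructor
    · intro r'
      have : (fun c' => L' r' c') =
          (fun e => (x : ZMod n) * e + (j' : ZMod n)) ∘ (fun c => L (σR.symm r') c) ∘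
            (fun c' : ZMod n => (u⁻¹ : (ZMod n)ˣ) * c') := by
        funext c'; exact key r' c'
      rw [this]
      exact (affbij.comp (hLatin.1 _)).comp (Units.mulLeft (u⁻¹)).bijective
    · intro c'
      have : (fun r' => L' r' c') =
          (fun e => (x : ZMod n) * e + (j' : ZMod n)) ∘
            (fun r => L r ((u⁻¹ : (ZMod n)ˣ) * c')) ∘ (fun r' : ZMod n => σR.symm r') := by
        funext r'; exact key r' c'
      rw [this]
      exact (affbij.comp (hLatin.2 _)).comp σR.symm.bijective
  · intro r' c'
    rw [key, key, mul_add, mul_one, shift, mul_add, huinv]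
    ring
end

section
/- Let n be even and let L₁, L₂ be cyclic Latin squares of order n generated by first columns f₁, f₂ : Z_n → Z_n respectively (so L_k(r,c) = f_k(r) + c mod n). Then L₁ and L₂ are nearly orthogonal if and only if the multiset of differences { f₁(r) − f₂(r) mod n : r ∈ Z_n } contains each nonzero element of Z_n except n/2 exactly once, contains n/2 exactly twice, and does not contain 0. -/
/-!
In the superimposition of the cyclic squares `f₁ r + c` and `f₂ r + c`, the cell `(r, c)` shows
the pair `(l, l')` exactly when `c = l - f₁ r` and `f₁ r - f₂ r = l - l'`. So the pair `(l, l')`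
occurs once for each row whose difference is `l - l'`, and the three clauses of near
orthogonality become conditions on the differences `0`, `-(n/2) = n/2` and all others.
-/

open Finset

namespace ZMod

variable {n : ℕ}

theorem natCast_half_add_self (hn : Even n) :
    ((n / 2 : ℕ) : ZMod n) + ((n / 2 : ℕ) : ZMod n) = 0 := by
  obtain ⟨k, rfl⟩ := hn
  rw [← Nat.cast_add, show (k + k) / 2 + (k + k) / 2 = k + k by omega, natCast_self]

theorem natCast_half_ne_zero [NeZero n] (hn : Even n) : ((n / 2 : ℕ) : ZMod n) ≠ 0 := by
  obtain ⟨k, rfl⟩ := hn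
  have hk : 0 < k := by have := NeZero.pos (k + k); omega
  rw [Ne, natCast_eq_zero_iff]
  exact Nat.not_dvd_of_pos_of_lt (by omega) (by omega)

end ZMod

variable {n : ℕ} [NeZero n]

theorem pairCount_cyclic (f₁ f₂ : ZMod n → ZMod n) (l l' : ZMod n) :
    pairCount n (fun r c => f₁ r + c) (fun r c => f₂ r + c) l l' =
      #{r | f₁ r - f₂ r = l - l'} := by
  refine card_nbij' Prod.fst (fun r => (r, l - f₁ r)) ?_ ?_ ?_ (fun _ _ => rfl)
  · rintro ⟨r, c⟩ hrc
    simp only [coe_filter, mem_univ, true_and, Set.mem_ofPred_eq] at hrc ⊢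
    linear_combination hrc.1 - hrc.2
  · intro r hr
    simp only [coe_filter, mem_univ, true_and, Set.mem_ofPred_eq] at hr ⊢
    exact ⟨by ring, by linear_combination -hr⟩
  · rintro ⟨r, c⟩ hrc
    simp only [coe_filter, mem_univ, true_and, Set.mem_ofPred_eq] at hrc
    simp only [Prod.mk.injEq, true_and]
    linear_combination -hrc.1

theorem nearlyOrth_cyclic_iff (hn : Even n) (f₁ f₂ : ZMod n → ZMod n) :
    NearlyOrth n (fun r c => f₁ r + c) (fun r c => f₂ r + c) ↔
      ∀ d : ZMod n,
        (d = 0 → #{r | f₁ r - f₂ r = d} = 0) ∧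
        (d = ((n / 2 : ℕ) : ZMod n) → d ≠ 0 → #{r | f₁ r - f₂ r = d} = 2) ∧
        (d ≠ 0 → d ≠ ((n / 2 : ℕ) : ZMod n) → #{r | f₁ r - f₂ r = d} = 1) := by
  have hh := ZMod.natCast_half_add_self hn
  simp only [NearlyOrth, pairCount_cyclic]
  constructor
  · intro h d
    obtain ⟨h₀, h₂, h₁⟩ := h d 0
    rw [sub_zero] at h₀ h₂ h₁
    refine ⟨fun hd => h₀ hd.symm, ?_, fun hd hdh => h₁ (Ne.symm hd) ?_⟩
    · rintro rfl hd
      exact h₂ (by linear_combination -hh) (Ne.symm hd)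
    · exact fun e => hdh (by linear_combination -e - hh)
  · intro h l l'
    obtain ⟨h₀, h₂, h₁⟩ := h (l - l')
    have hsub_ne : l' ≠ l → l - l' ≠ 0 := fun hne e => hne (by linear_combination -e)
    refine ⟨fun e => h₀ (by linear_combination -e), fun e hne => ?_, fun hne hne' => ?_⟩
    · exact h₂ (by linear_combination -e - hh) (hsub_ne hne)
    · exact h₁ (hsub_ne hne) fun e => hne' (by linear_combination -e - hh)

theorem cyclic_nearlyOrth_iff_differences_general (n : ℕ) [NeZero n] (hn : Even n)
    (f₁ f₂ : ZMod n → ZMod n) :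
    NearlyOrth n (fun r c => f₁ r + c) (fun r c => f₂ r + c) ↔
      ((Finset.univ.filter fun r : ZMod n => f₁ r - f₂ r = 0).card = 0 ∧
       (Finset.univ.filter fun r : ZMod n => f₁ r - f₂ r = ((n / 2 : ℕ) : ZMod n)).card = 2 ∧
       ∀ d : ZMod n, d ≠ 0 → d ≠ ((n / 2 : ℕ) : ZMod n) →
         (Finset.univ.filter fun r : ZMod n => f₁ r - f₂ r = d).card = 1) := by
  rw [nearlyOrth_cyclic_iff hn]
  constructor
  · intro h
    exact ⟨(h 0).1 rfl, (h _).2.1 rfl (ZMod.natCast_half_ne_zero hn), fun d => (h d).2.2⟩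
  · rintro ⟨h₀, h₂, h₁⟩ d
    exact ⟨by rintro rfl; exact h₀, by rintro rfl -; exact h₂, h₁ d⟩

/-- Two cyclic Latin squares generated by first columns `f₁, f₂` are nearly orthogonal iff
the multiset of differences `f₁(r) - f₂(r)` omits `0`, contains `n/2` exactly twice, and
contains every other residue exactly once. -/
theorem cyclic_nearlyOrth_iff_differences (n : ℕ) [NeZero n] (hn : Even n)
    (f₁ f₂ : ZMod n → ZMod n) (hf₁ : Function.Bijective f₁) (hf₂ : Function.Bijective f₂) :
    NearlyOrth n (fun r c => f₁ r + c) (fun r c => f₂ r + c) ↔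
      ((Finset.univ.filter fun r : ZMod n => f₁ r - f₂ r = 0).card = 0 ∧
       (Finset.univ.filter fun r : ZMod n => f₁ r - f₂ r = ((n / 2 : ℕ) : ZMod n)).card = 2 ∧
       ∀ d : ZMod n, d ≠ 0 → d ≠ ((n / 2 : ℕ) : ZMod n) →
         (Finset.univ.filter fun r : ZMod n => f₁ r - f₂ r = d).card = 1) :=
  cyclic_nearlyOrth_iff_differences_general n hn f₁ f₂
end

section
/- Let n be even, and let f₁, f₂ : Z_n → Z_n be bijections generating nearly orthogonal cyclic Latin squares of order n (via L_k(r,c) = f_k(r)+c). Then for every unit x of Z_n and every a,b ∈ Z_n and every permutation σ of Z_n, the bijections g_k(r) = x·f_k(σ(r)) + b − x·a (k = 1,2) also generate nearly orthogonal cyclic Latin squares, provided x·(n/2) ≡ n/2 (mod n). -/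
lemma pc_eq (n : ℕ) [NeZero n] (g₁ g₂ : ZMod n → ZMod n) (l l' : ZMod n) :
    pairCount n (fun r c => g₁ r + c) (fun r c => g₂ r + c) l l'
      = (Finset.univ.filter fun r : ZMod n => g₂ r - g₁ r = l' - l).card := by
  unfold pairCount
  apply Finset.card_bij (fun p _ => p.1)
  · intro p hp
    simp only [Finset.mem_filter, Finset.mem_univ, true_and] at hp ⊢
    have h1 := hp.1; have h2 := hp.2
    have : g₂ p.1 - g₁ p.1 = (g₂ p.1 + p.2) - (g₁ p.1 + p.2) := by ring
    rw [this, h1, h2]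
  · intro p hp q hq hpq
    simp only [Finset.mem_filter, Finset.mem_univ, true_and] at hp hq
    have : p.2 = q.2 := by
      have h1 := hp.1; have h2 := hq.1
      have := h1.trans h2.symm
      rw [hpq] at this
      exact add_left_cancel this
    exact Prod.ext hpq this
  · intro r hr
    simp only [Finset.mem_filter, Finset.mem_univ, true_and] at hr
    refine ⟨(r, l - g₁ r), ?_, rfl⟩
    simp only [Finset.mem_filter, Finset.mem_univ, true_and]
    constructor
    · ring
    · have : g₂ r = g₁ r + (l' - l) := by rw [← hr]; ring
      rw [this]; ring

/-- If `f₁, f₂` generate nearly orthogonal cyclic Latin squares, then for any unit `x`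
with `x·(n/2) = n/2`, any `a, b`, and any permutation `σ`, the maps
`g_k(r) = x·f_k(σ(r)) + b - x·a` are bijections generating nearly orthogonal cyclic
Latin squares. -/
theorem nearlyOrth_cyclic_transform (n : ℕ) [NeZero n] (hn : Even n)
    (f₁ f₂ : ZMod n → ZMod n) (hf₁ : Function.Bijective f₁) (hf₂ : Function.Bijective f₂)
    (hNO : NearlyOrth n (fun r c => f₁ r + c) (fun r c => f₂ r + c))
    (x : ZMod n) (hx : IsUnit x) (hxhalf : x * ((n / 2 : ℕ) : ZMod n) = ((n / 2 : ℕ) : ZMod n))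
    (a b : ZMod n) (σ : Equiv.Perm (ZMod n)) :
    Function.Bijective (fun r => x * f₁ (σ r) + b - x * a) ∧
    Function.Bijective (fun r => x * f₂ (σ r) + b - x * a) ∧
    NearlyOrth n (fun r c => (x * f₁ (σ r) + b - x * a) + c)
      (fun r c => (x * f₂ (σ r) + b - x * a) + c) := by
  obtain ⟨y, hy⟩ := hx.exists_left_inv
  have hxy : x * y = 1 := by rw [mul_comm]; exact hy
  have hcancel : ∀ d e : ZMod n, x * d = e ↔ d = y * e := by
    intro d e
    constructor
    · intro h; rw [← h]; rw [← mul_assoc, hy, one_mul]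
    · intro h; rw [h, ← mul_assoc, hxy, one_mul]
  have hbij : ∀ f : ZMod n → ZMod n, Function.Bijective f →
      Function.Bijective (fun r => x * f (σ r) + b - x * a) := by
    intro f hf
    rw [Function.Bijective]
    refine Finite.injective_iff_bijective.mp ?_
    intro r₁ r₂ h
    simp only [sub_left_inj, add_left_inj] at h
    have := (hcancel _ _).mp h
    rw [← mul_assoc, hy, one_mul] at this
    exact σ.injective (hf.injective this)
  -- count formula
  have half : ∀ d : ZMod n, y * d = ((n/2:ℕ) : ZMod n) ↔ d = ((n/2:ℕ) : ZMod n) := by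
    intro d
    constructor
    · intro h
      have : x * (y * d) = x * ((n/2:ℕ) : ZMod n) := by rw [h]
      rw [← mul_assoc, hxy, one_mul, hxhalf] at this
      exact this
    · intro h; rw [h]
      have := (hcancel ((n/2:ℕ) : ZMod n) ((n/2:ℕ) : ZMod n)).mp hxhalf
      exact this.symm
  have key : ∀ l l' : ZMod n,
      pairCount n (fun r c => (x * f₁ (σ r) + b - x * a) + c)
        (fun r c => (x * f₂ (σ r) + b - x * a) + c) l l'
      = pairCount n (fun r c => f₁ r + c) (fun r c => f₂ r + c) l (l + y * (l' - l)) := by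
    intro l l'
    rw [pc_eq, pc_eq]
    have hset : ∀ r : ZMod n,
        ((x * f₂ (σ r) + b - x * a) - (x * f₁ (σ r) + b - x * a) = l' - l)
        ↔ (f₂ (σ r) - f₁ (σ r) = (l + y * (l' - l)) - l) := by
      intro r
      have : (x * f₂ (σ r) + b - x * a) - (x * f₁ (σ r) + b - x * a)
          = x * (f₂ (σ r) - f₁ (σ r)) := by ring
      rw [this, hcancel, add_sub_cancel_left]
    apply Finset.card_bij (fun r _ => σ r)
    · intro r hr
      simp only [Finset.mem_filter, Finset.mem_univ, true_and] at hr ⊢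
      have := (hset r).mp hr
      simpa using this
    · intro r₁ _ r₂ _ h; exact σ.injective h
    · intro r hr
      simp only [Finset.mem_filter, Finset.mem_univ, true_and] at hr
      refine ⟨σ.symm r, ?_, by simp⟩
      simp only [Finset.mem_filter, Finset.mem_univ, true_and]
      exact (hset (σ.symm r)).mpr (by simpa using hr)
  refine ⟨hbij f₁ hf₁, hbij f₂ hf₂, ?_⟩
  intro l l'
  have hNO' := hNO l (l + y * (l' - l))
  refine ⟨?_, ?_, ?_⟩
  · intro hll
    rw [key]
    apply hNO'.1
    rw [hll]; simp
  · intro hll hne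
    rw [key]
    have hd : l' - l = ((n/2:ℕ) : ZMod n) := by rw [hll]; ring
    have hyd : y * (l' - l) = ((n/2:ℕ) : ZMod n) := by
      rw [hd]
      exact ((hcancel _ _).mp hxhalf).symm
    apply hNO'.2.1
    · rw [hyd]
    · rw [hyd, ← hll]; exact hne
  · intro hne hne2
    rw [key]
    have hd : l' - l ≠ 0 := sub_ne_zero.mpr hne
    apply hNO'.2.2
    · intro hc
      apply hd
      have hy0 : y * (l' - l) = 0 := by linear_combination hc
      have := congrArg (x * ·) hy0
      simpa [← mul_assoc, hxy] using this
    · intro hc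
      apply hne2
      have hy2 : y * (l' - l) = ((n/2:ℕ) : ZMod n) := by linear_combination hc
      have := (half (l' - l)).mp hy2
      linear_combination this
end

section
/- If n ≡ 2 (mod 4) and there exists a set of μ mutually nearly orthogonal Latin squares of order n, then μ ≤ n/2 + 1. -/
/-- If `n ≡ 2 (mod 4)` and there exists a set of `μ` MNOLS of order `n`, then `μ ≤ n/2 + 1`. -/
theorem mnols_upper_bound_two_mod_four (n μ : ℕ) [NeZero n] (hn : n % 4 = 2)
    (Ls : Fin μ → ZMod n → ZMod n → ZMod n)
    (hLatin : ∀ i, IsLatinSq n (Ls i))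
    (hNO : ∀ i j, i ≠ j → NearlyOrth n (Ls i) (Ls j)) :
    μ ≤ n / 2 + 1 := by
  classical
  have h2 : (2 : ℕ) ∣ n := by omega
  set π : ZMod n →+* ZMod 2 := ZMod.castHom h2 (ZMod 2) with hπdef
  -- the shift n/2 has odd parity
  have hπc : π ((n / 2 : ℕ) : ZMod n) = 1 := by
    have h1 : π ((n / 2 : ℕ) : ZMod n) = ((n / 2 : ℕ) : ZMod 2) := map_natCast π (n / 2)
    have h3 : (n / 2) % 2 = 1 := by omega
    rw [h1, ← ZMod.natCast_mod (n / 2) 2, h3, Nat.cast_one]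
  have hc0 : ((n / 2 : ℕ) : ZMod n) ≠ 0 := by
    intro h
    rw [h, map_zero] at hπc
    exact zero_ne_one hπc
  -- the sign character
  set χ : ZMod 2 → ℤ := fun x => if x = 0 then 1 else -1 with hχdef
  have hχsq : ∀ x : ZMod 2, χ x * χ x = 1 := by decide
  have hχflip : ∀ x : ZMod 2, χ x * χ (x + 1) = -1 := by decide
  set f : Fin μ → ZMod n × ZMod n → ℤ := fun i p => χ (π (Ls i p.1 p.2)) with hfdef
  -- grouping cells by the pair of values shown
  have key : ∀ (i j : Fin μ) (w : ZMod n → ZMod n → ℤ),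
      ∑ q : ZMod n × ZMod n, (pairCount n (Ls i) (Ls j) q.1 q.2 : ℤ) * w q.1 q.2
        = ∑ p : ZMod n × ZMod n, w (Ls i p.1 p.2) (Ls j p.1 p.2) := by
    intro i j w
    have step : ∀ q : ZMod n × ZMod n, (pairCount n (Ls i) (Ls j) q.1 q.2 : ℤ) * w q.1 q.2
        = ∑ p : ZMod n × ZMod n,
            if Ls i p.1 p.2 = q.1 ∧ Ls j p.1 p.2 = q.2 then w q.1 q.2 else 0 := by
      intro q
      rw [pairCount, Finset.card_filter]
      push_cast
      rw [Finset.sum_mul]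
      refine Finset.sum_congr rfl fun p _ => ?_
      by_cases h : Ls i p.1 p.2 = q.1 ∧ Ls j p.1 p.2 = q.2 <;> simp [h]
    rw [Finset.sum_congr rfl fun q _ => step q, Finset.sum_comm]
    refine Finset.sum_congr rfl fun p _ => ?_
    rw [Fintype.sum_prod_type]
    simp [ite_and, Finset.sum_ite_eq]
  -- parity class sizes
  have hcardZ : Fintype.card (ZMod n) = n := ZMod.card n
  have hnegone : ∀ x : ZMod 2, (¬ x = 0) ↔ x = 1 := by decide
  have hfilterneg :
      (Finset.univ.filter fun l : ZMod n => ¬ π l = 0)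
        = Finset.univ.filter fun l : ZMod n => π l = 1 := by
    refine Finset.filter_congr fun x _ => ?_
    simp [hnegone]
  have hsumA : (Finset.univ.filter fun l : ZMod n => π l = 0).card
      + (Finset.univ.filter fun l : ZMod n => π l = 1).card = n := by
    rw [← hfilterneg, Finset.card_filter_add_card_filter_not, Finset.card_univ, hcardZ]
  have hswap : (Finset.univ.filter fun l : ZMod n => π l = 0).card
      = (Finset.univ.filter fun l : ZMod n => π l = 1).card := by
    refine Finset.card_bij' (fun l _ => l + 1) (fun l _ => l - 1) ?_ ?_ ?_ ?_
    · intro a ha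
      simp only [Finset.mem_filter, Finset.mem_univ, true_and] at ha ⊢
      rw [map_add, ha, map_one, zero_add]
    · intro a ha
      simp only [Finset.mem_filter, Finset.mem_univ, true_and] at ha ⊢
      rw [map_sub, ha, map_one, sub_self]
    · intro a _; ring
    · intro a _; ring
  -- the total parity sum vanishes
  have hS : ∑ l : ZMod n, χ (π l) = 0 := by
    rw [hχdef]
    simp only
    rw [Finset.sum_ite, Finset.sum_const, Finset.sum_const, hfilterneg, hswap]
    simp
  -- off-diagonal inner products
  have hIP : ∀ i j : Fin μ, i ≠ j →
      ∑ p : ZMod n × ZMod n, f i p * f j p = (n : ℤ) * (-2) := by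
    intro i j hij
    have hcnt : ∀ l l' : ZMod n, (pairCount n (Ls i) (Ls j) l l' : ℤ)
        = 1 - (if l' = l then 1 else 0)
          + (if l' = l + ((n / 2 : ℕ) : ZMod n) then 1 else 0) := by
      intro l l'
      obtain ⟨h0, htwo, hone⟩ := hNO i j hij l l'
      by_cases e1 : l' = l
      · have e2 : ¬ l' = l + ((n / 2 : ℕ) : ZMod n) := by
          rw [e1]
          intro h
          exact hc0 (left_eq_add.mp h)
        rw [h0 e1, if_pos e1, if_neg e2]
        norm_num
      · by_cases e2 : l' = l + ((n / 2 : ℕ) : ZMod n)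
        · rw [htwo e2 e1, if_neg e1, if_pos e2]
          norm_num
        · rw [hone e1 e2, if_neg e1, if_neg e2]
          norm_num
    have hinner : ∀ l : ZMod n,
        ∑ l' : ZMod n, (pairCount n (Ls i) (Ls j) l l' : ℤ) * (χ (π l) * χ (π l')) = -2 := by
      intro l
      have hterm : ∀ l' : ZMod n,
          (pairCount n (Ls i) (Ls j) l l' : ℤ) * (χ (π l) * χ (π l'))
            = χ (π l) * χ (π l')
              - (if l' = l then χ (π l) * χ (π l') else 0)
              + (if l' = l + ((n / 2 : ℕ) : ZMod n) then χ (π l) * χ (π l') else 0) := by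
        intro l'
        rw [hcnt l l']
        split_ifs <;> ring
      rw [Finset.sum_congr rfl fun l' _ => hterm l']
      rw [Finset.sum_add_distrib, Finset.sum_sub_distrib]
      rw [Finset.sum_ite_eq' Finset.univ l fun l' => χ (π l) * χ (π l')]
      rw [Finset.sum_ite_eq' Finset.univ (l + ((n / 2 : ℕ) : ZMod n))
        fun l' => χ (π l) * χ (π l')]
      rw [← Finset.mul_sum, hS, mul_zero]
      have h1 : χ (π l) * χ (π l) = 1 := hχsq _
      have h2 : χ (π l) * χ (π (l + ((n / 2 : ℕ) : ZMod n))) = -1 := by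
        rw [map_add, hπc]
        exact hχflip _
      rw [if_pos (Finset.mem_univ l), if_pos (Finset.mem_univ (l + ((n / 2 : ℕ) : ZMod n))),
        h1, h2]
      norm_num
    have hw := key i j fun l l' => χ (π l) * χ (π l')
    have hlhs : ∑ p : ZMod n × ZMod n, f i p * f j p
        = ∑ p : ZMod n × ZMod n,
            (fun l l' => χ (π l) * χ (π l')) (Ls i p.1 p.2) (Ls j p.1 p.2) := rfl
    rw [hlhs, ← hw, Fintype.sum_prod_type]
    simp only
    rw [Finset.sum_congr rfl fun l _ => hinner l, Finset.sum_const, Finset.card_univ, hcardZ]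
    rw [nsmul_eq_mul]
  -- diagonal inner products
  have hdiag : ∀ i : Fin μ, ∑ p : ZMod n × ZMod n, f i p * f i p = (n : ℤ) * n := by
    intro i
    rw [Finset.sum_congr rfl fun p _ => hχsq (π (Ls i p.1 p.2))]
    rw [Finset.sum_const, Finset.card_univ, Fintype.card_prod, hcardZ]
    push_cast
    ring
  -- positivity of the Gram sum
  have hpos : (0 : ℤ) ≤ ∑ p : ZMod n × ZMod n, (∑ i : Fin μ, f i p) ^ 2 :=
    Finset.sum_nonneg fun p _ => sq_nonneg _
  have hexpand : ∑ p : ZMod n × ZMod n, (∑ i : Fin μ, f i p) ^ 2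
      = ∑ i : Fin μ, ∑ j : Fin μ, ∑ p : ZMod n × ZMod n, f i p * f j p := by
    have h1 : ∀ p : ZMod n × ZMod n,
        (∑ i : Fin μ, f i p) ^ 2 = ∑ i : Fin μ, ∑ j : Fin μ, f i p * f j p := by
      intro p
      rw [sq, Finset.sum_mul_sum]
    rw [Finset.sum_congr rfl fun p _ => h1 p, Finset.sum_comm]
    exact Finset.sum_congr rfl fun i _ => Finset.sum_comm
  rcases Nat.eq_zero_or_pos μ with h0 | hμpos
  · omega
  have hval : ∑ i : Fin μ, ∑ j : Fin μ, ∑ p : ZMod n × ZMod n, f i p * f j p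
      = (μ : ℤ) * ((n : ℤ) * n + ((μ : ℤ) - 1) * ((n : ℤ) * (-2))) := by
    have hj : ∀ i : Fin μ, ∑ j : Fin μ, ∑ p : ZMod n × ZMod n, f i p * f j p
        = (n : ℤ) * n + ((μ : ℤ) - 1) * ((n : ℤ) * (-2)) := by
      intro i
      rw [← Finset.add_sum_erase _ _ (Finset.mem_univ i), hdiag i]
      congr 1
      rw [Finset.sum_congr rfl fun j hj => hIP i j (Ne.symm (Finset.mem_erase.1 hj).1)]
      rw [Finset.sum_const, Finset.card_erase_of_mem (Finset.mem_univ i),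
        Finset.card_univ, Fintype.card_fin, nsmul_eq_mul, Nat.cast_sub hμpos]
      push_cast
      ring
    rw [Finset.sum_congr rfl fun i _ => hj i, Finset.sum_const, Finset.card_univ,
      Fintype.card_fin, nsmul_eq_mul]
  rw [hexpand, hval] at hpos
  -- final arithmetic
  by_contra hcon
  push_neg at hcon
  have hm : n = 2 * (n / 2) := by omega
  have hm1 : 1 ≤ n / 2 := by omega
  have hμZ : (1 : ℤ) ≤ (μ : ℤ) := by exact_mod_cast hμpos
  have hmZ : (n : ℤ) = 2 * ((n / 2 : ℕ) : ℤ) := by exact_mod_cast hm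
  have hm1Z : (1 : ℤ) ≤ ((n / 2 : ℕ) : ℤ) := by exact_mod_cast hm1
  have hconZ : ((n / 2 : ℕ) : ℤ) + 2 ≤ (μ : ℤ) := by exact_mod_cast hcon
  rw [hmZ] at hpos
  have hM0 : (0 : ℤ) ≤ ((n / 2 : ℕ) : ℤ) := by linarith
  have hU0 : (0 : ℤ) ≤ (μ : ℤ) := by linarith
  have ha : (0 : ℤ) ≤ (μ : ℤ) - ((n / 2 : ℕ) : ℤ) - 2 := by linarith
  have hMUE : (0 : ℤ) ≤ ((n / 2 : ℕ) : ℤ) * (μ : ℤ) * ((μ : ℤ) - ((n / 2 : ℕ) : ℤ) - 2) :=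
    mul_nonneg (mul_nonneg hM0 hU0) ha
  have hMU : (1 : ℤ) ≤ ((n / 2 : ℕ) : ℤ) * (μ : ℤ) := by nlinarith
  nlinarith [hpos, hMUE, hMU]
end
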